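/- arXiv:2007.02815 — 3 statements merged into one kernel-verified Lean document; each statement's English description precedes it below -/
import Mathlib

section
/- For every α > 0, every x > 0, and every positive integer n, one has |p_α(x) − (1/(πx)) ∑_{k=1}^{n} (−1)^{k+1} sin(kπ/2) Γ(1+k/α) x^{k}/k!| ≤ x^{n} Γ((n+1)/α)/(π α n!). -/
/-!
Replace `cos (x y)` by its Taylor polynomial of degree `n - 1`, whose Lagrange remainder is at most
`(x y)ⁿ / n!`, and integrate against `exp (-y ^ α)` over `(0, ∞)`. The moments
`∫₀^∞ yʲ exp (-y ^ α) dy = Γ((j + 1) / α) / α` turn the polynomial into the partial sum: with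
`k = j + 1`, `Γ(1 + k / α) = (k / α) Γ(k / α)` and `k! = k · j!`, while `(-1)^(k+1) sin (k π / 2)`
equals `cos (j π / 2)` because both vanish for even `k`. The remainder integrates to the bound.
-/

open MeasureTheory Real Set

/-- The 1-dimensional symmetric `α`-stable density at time 1, via Fourier inversion. -/
noncomputable def stableDensity (α : ℝ) (x : ℝ) : ℝ :=
  (1 / Real.pi) * ∫ y in Set.Ioi (0 : ℝ), Real.cos (x * y) * Real.exp (-(y ^ α))

open Finset
open scoped Nat

theorem Real.iteratedDeriv_cos (k : ℕ) :
    iteratedDeriv k cos = fun t => cos (t + k * (π / 2)) := by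
  induction k with
  | zero => simp
  | succ k ih =>
    ext t
    have : HasDerivAt (fun t => cos (t + k * (π / 2))) (-sin (t + k * (π / 2))) t := by
      simpa using ((hasDerivAt_id t).add_const (k * (π / 2))).cos
    rw [iteratedDeriv_succ, ih, this.deriv, Nat.cast_succ, add_one_mul, ← add_assoc,
      cos_add_pi_div_two]

theorem abs_sub_sum_iteratedDeriv_le {f : ℝ → ℝ} {n : ℕ} {C : ℝ} (hf : ContDiff ℝ n f)
    (hC : ∀ s, |iteratedDeriv n f s| ≤ C) (x₀ x : ℝ) :
    |f x - ∑ j ∈ range n, iteratedDeriv j f x₀ * (x - x₀) ^ j / j !| ≤ C * |x - x₀| ^ n / n ! := by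
  rcases n with _ | m
  · simpa using hC x
  rcases eq_or_ne x₀ x with rfl | hne
  · simp [sum_range_succ']
  obtain ⟨x', -, hrem⟩ := taylor_mean_remainder_lagrange_iteratedDeriv hne hf.contDiffOn
  have htaylor : taylorWithinEval f m (uIcc x₀ x) x₀ x =
      ∑ j ∈ range (m + 1), iteratedDeriv j f x₀ * (x - x₀) ^ j / j ! := by
    rw [taylor_within_apply]
    refine sum_congr rfl fun j hj => ?_
    rw [iteratedDerivWithin_eq_iteratedDeriv (uniqueDiffOn_uIcc hne)
      (hf.contDiffAt.of_le (by exact_mod_cast (mem_range.1 hj).le)) left_mem_uIcc, smul_eq_mul]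
    ring
  rw [← htaylor, hrem, abs_div, abs_mul, abs_pow, Nat.abs_cast]
  gcongr
  exact hC x'

theorem abs_cos_sub_sum_le (n : ℕ) (t : ℝ) :
    |cos t - ∑ j ∈ range n, cos (j * (π / 2)) * t ^ j / j !| ≤ |t| ^ n / n ! := by
  simpa [Real.iteratedDeriv_cos] using
    abs_sub_sum_iteratedDeriv_le contDiff_cos (abs_iteratedDeriv_cos_le_one n) 0 t

theorem abs_integral_cos_mul_sub_sum_le {μ : Measure ℝ} {w : ℝ → ℝ} {n : ℕ} (hw : 0 ≤ w)
    (hmom : ∀ j ≤ n, Integrable (fun y => y ^ j * w y) μ) (x : ℝ) :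
    |∫ y, cos (x * y) * w y ∂μ -
        ∑ j ∈ range n, cos (j * (π / 2)) * x ^ j / j ! * ∫ y, y ^ j * w y ∂μ| ≤
      |x| ^ n / n ! * ∫ y, |y| ^ n * w y ∂μ := by
  set P : ℝ → ℝ := fun t => ∑ j ∈ range n, cos (j * (π / 2)) * t ^ j / (j ! : ℝ)
  have hw_int : Integrable w μ := by simpa using hmom 0 n.zero_le
  have hcos : Integrable (fun y => cos (x * y) * w y) μ :=
    hw_int.bdd_mul (by fun_prop) (ae_of_all _ fun y => by simpa using abs_cos_le_one (x * y))
  have hterm (j) (hj : j ∈ range n) :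
      Integrable (fun y => cos (j * (π / 2)) * x ^ j / j ! * (y ^ j * w y)) μ :=
    (hmom j (mem_range.1 hj).le).const_mul _
  have hPw : (fun y => P (x * y) * w y) =
      fun y => ∑ j ∈ range n, cos (j * (π / 2)) * x ^ j / j ! * (y ^ j * w y) := by
    ext y
    simp only [P, sum_mul]
    exact sum_congr rfl fun j _ => by ring
  have hP : ∑ j ∈ range n, cos (j * (π / 2)) * x ^ j / j ! * ∫ y, y ^ j * w y ∂μ =
      ∫ y, P (x * y) * w y ∂μ := by
    simp_rw [hPw, integral_finsetSum _ hterm, integral_const_mul]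
  have hbound : Integrable (fun y => |x| ^ n / n ! * (|y| ^ n * w y)) μ := by
    refine ((hmom n le_rfl).abs.const_mul (|x| ^ n / n !)).congr (ae_of_all _ fun y => ?_)
    simp only [abs_mul, abs_pow, abs_of_nonneg (hw y)]
  rw [hP, ← integral_sub hcos (hPw ▸ integrable_finsetSum _ hterm), ← integral_const_mul,
    ← Real.norm_eq_abs]
  refine norm_integral_le_of_norm_le hbound (ae_of_all _ fun y => ?_)
  rw [← sub_mul, Real.norm_eq_abs, abs_mul, abs_of_nonneg (hw y)]
  calc |cos (x * y) - P (x * y)| * w y ≤ |x * y| ^ n / n ! * w y :=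
        mul_le_mul_of_nonneg_right (abs_cos_sub_sum_le n (x * y)) (hw y)
    _ = |x| ^ n / n ! * (|y| ^ n * w y) := by rw [abs_mul, mul_pow]; ring

theorem integrableOn_pow_mul_exp_neg_rpow {α : ℝ} (hα : 0 < α) (k : ℕ) :
    IntegrableOn (fun y : ℝ => y ^ k * exp (-y ^ α)) (Ioi 0) := by
  simpa only [rpow_natCast] using
    integrableOn_rpow_mul_exp_neg_rpow (s := k) (by linarith [k.cast_nonneg (α := ℝ)]) hα

theorem integral_pow_mul_exp_neg_rpow {α : ℝ} (hα : 0 < α) (k : ℕ) :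
    ∫ y in Ioi (0 : ℝ), y ^ k * exp (-y ^ α) = Gamma ((k + 1) / α) / α := by
  simpa only [rpow_natCast, one_div, inv_mul_eq_div] using
    integral_rpow_mul_exp_neg_rpow (q := k) hα (by linarith [k.cast_nonneg (α := ℝ)])

theorem neg_one_pow_mul_cos_nat_mul_pi_div_two (j : ℕ) :
    (-1 : ℝ) ^ j * cos (j * (π / 2)) = cos (j * (π / 2)) := by
  obtain ⟨r, rfl | rfl⟩ := j.even_or_odd'
  · simp [pow_mul]
  · have : ((2 * r + 1 : ℕ) : ℝ) * (π / 2) = r * π + π / 2 := by push_cast; ring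
    rw [this, cos_add_pi_div_two, sin_nat_mul_pi]
    simp

theorem sum_Icc_sin_mul_Gamma_eq {α : ℝ} (hα : α ≠ 0) (x : ℝ) (n : ℕ) :
    ∑ k ∈ Icc 1 n, (-1 : ℝ) ^ (k + 1) * sin (k * π / 2) * Gamma (1 + k / α) * x ^ k / k ! =
      x * ∑ j ∈ range n, cos (j * (π / 2)) * x ^ j / j ! * (Gamma ((j + 1) / α) / α) := by
  induction n with
  | zero => simp
  | succ n ih =>
    rw [sum_Icc_succ_top (by omega), ih, sum_range_succ, mul_add]
    congr 1
    have hsin : sin ((n + 1 : ℕ) * π / 2) = cos (n * (π / 2)) := by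
      rw [← sin_add_pi_div_two]; push_cast; ring_nf
    have hGamma : Gamma (1 + (n + 1 : ℕ) / α) = (n + 1) / α * Gamma ((n + 1) / α) := by
      rw [add_comm, Gamma_add_one (by positivity)]; push_cast; rfl
    rw [hsin, hGamma, pow_add _ n 2, neg_one_sq, mul_one, neg_one_pow_mul_cos_nat_mul_pi_div_two,
      Nat.factorial_succ]
    push_cast
    field_simp
    ring

theorem ascending_expansion_with_remainder_general (α : ℝ) (hα : 0 < α) (x : ℝ) (hx : 0 < x)
    (n : ℕ) :
    |stableDensity α x -
      (1 / (Real.pi * x)) * ∑ k ∈ Finset.Icc 1 n,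
        (-1 : ℝ) ^ (k + 1) * Real.sin ((k : ℝ) * Real.pi / 2) *
          Real.Gamma (1 + (k : ℝ) / α) * x ^ k / (Nat.factorial k : ℝ)| ≤
      x ^ n * Real.Gamma (((n : ℝ) + 1) / α) / (Real.pi * α * (Nat.factorial n : ℝ)) := by
  have hbound := abs_integral_cos_mul_sub_sum_le (μ := volume.restrict (Ioi 0)) (n := n)
    (fun y => (exp_pos (-y ^ α)).le) (fun j _ => integrableOn_pow_mul_exp_neg_rpow hα j) x
  have habs : ∫ y in Ioi (0 : ℝ), |y| ^ n * exp (-y ^ α) = ∫ y in Ioi 0, y ^ n * exp (-y ^ α) :=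
    setIntegral_congr_fun measurableSet_Ioi fun y hy => by rw [abs_of_pos hy]
  simp only [habs, abs_of_pos hx, integral_pow_mul_exp_neg_rpow hα] at hbound
  rw [stableDensity, sum_Icc_sin_mul_Gamma_eq hα.ne', ← one_div_mul_one_div, mul_assoc,
    ← mul_assoc (1 / x), one_div_mul_cancel hx.ne', one_mul, ← mul_sub, abs_mul,
    abs_of_pos (by positivity)]
  calc 1 / π * |_| ≤ 1 / π * (x ^ n / n ! * (Gamma ((n + 1) / α) / α)) := by gcongr
    _ = _ := by field_simp

theorem ascending_expansion_with_remainder (α : ℝ) (hα : 0 < α) (x : ℝ) (hx : 0 < x)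
    (n : ℕ) (hn : 0 < n) :
    |stableDensity α x -
      (1 / (Real.pi * x)) * ∑ k ∈ Finset.Icc 1 n,
        (-1 : ℝ) ^ (k + 1) * Real.sin ((k : ℝ) * Real.pi / 2) *
          Real.Gamma (1 + (k : ℝ) / α) * x ^ k / (Nat.factorial k : ℝ)| ≤
      x ^ n * Real.Gamma (((n : ℝ) + 1) / α) / (Real.pi * α * (Nat.factorial n : ℝ)) :=
  ascending_expansion_with_remainder_general α hα x hx n
end

section
/- For every compact set K ⊂ ℂ there exists a constant c = c(K) > 0 such that for all z ∈ K, all τ ∈ [1,2], and all natural numbers M, N, the partial double product satisfies |∏_{0 ≤ m ≤ M} ∏_{0 ≤ n ≤ N, (m,n) ≠ (0,0)} E₂(−z/(mτ + n))| ≤ c. In particular, the double infinite product appearing in the definition of the double gamma function G(z;τ) has all its partial products bounded uniformly over (z,τ) ∈ K × [1,2]. -/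
/-!
The canonical factor satisfies `|E₂(w)| ≤ exp (9 |w|³)` on all of `ℂ`: for `|w| ≤ 1/2` this is
the Taylor estimate `log (1 - w) + w + w²/2 = O(|w|³)`, and for `|w| ≥ 1/2` the crude bound
`|E₂(w)| ≤ exp (2|w| + |w|²/2)` is dominated by `exp (9 |w|³)`. Hence a finite product of canonical
factors is bounded by `exp (9 ∑ |w|³)`. For `τ ≥ 1` and `(m, n) ≠ (0, 0)` we have
`mτ + n ≥ (m + n + 1)/2`, so with `|z| ≤ R` on `K` the exponent is at most
`72 R³ ∑_{m,n} (m + n + 1)⁻³`, a convergent lattice sum.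
-/

open Complex Set

/-- The Weierstrass canonical factor of degree 2: `E₂(w) = (1 - w) e^{w + w²/2}`. -/
noncomputable def E₂ (w : ℂ) : ℂ := (1 - w) * Complex.exp (w + w ^ 2 / 2)

lemma E₂_zero : E₂ 0 = 1 := by simp [E₂]

lemma E₂_eq_exp_log_sub_logTaylor {w : ℂ} (hw : w ≠ 1) :
    E₂ w = Complex.exp (Complex.log (1 + -w) - Complex.logTaylor 3 (-w)) := by
  have hne : 1 + -w ≠ 0 := fun h => hw (by linear_combination -h)
  have hT : Complex.logTaylor 3 (-w) = -(w + w ^ 2 / 2) := by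
    simp only [Complex.logTaylor, Finset.sum_range_succ, Finset.sum_range_zero]
    push_cast
    ring
  rw [hT, sub_neg_eq_add, Complex.exp_add, Complex.exp_log hne, E₂]
  ring

lemma norm_E₂_le_exp_pow_three_of_norm_le_half {w : ℂ} (hw : ‖w‖ ≤ 1 / 2) :
    ‖E₂ w‖ ≤ Real.exp (‖w‖ ^ 3) := by
  have hw1 : ‖-w‖ < 1 := by rw [norm_neg]; linarith
  have hinv : (1 - ‖w‖)⁻¹ ≤ 2 := by
    rw [inv_le_comm₀ (by linarith) (by norm_num)]; linarith
  rw [E₂_eq_exp_log_sub_logTaylor (by rintro rfl; norm_num at hw)]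
  refine (Complex.norm_exp_le_exp_norm _).trans (Real.exp_le_exp.2 ?_)
  calc _ ≤ ‖-w‖ ^ (2 + 1) * (1 - ‖-w‖)⁻¹ / (2 + 1) := Complex.norm_log_sub_logTaylor_le 2 hw1
    _ ≤ ‖w‖ ^ 3 * 2 / 3 := by rw [norm_neg]; gcongr; norm_num
    _ ≤ ‖w‖ ^ 3 := by linarith [pow_nonneg (norm_nonneg w) 3]

lemma norm_E₂_le_exp (w : ℂ) : ‖E₂ w‖ ≤ Real.exp (2 * ‖w‖ + ‖w‖ ^ 2 / 2) := by
  have h1 : ‖1 - w‖ ≤ Real.exp ‖w‖ :=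
    (norm_sub_le _ _).trans (by rw [norm_one, add_comm]; exact Real.add_one_le_exp _)
  have h2 : ‖w + w ^ 2 / 2‖ ≤ ‖w‖ + ‖w‖ ^ 2 / 2 :=
    (norm_add_le _ _).trans_eq (by simp [norm_pow])
  rw [E₂, norm_mul, show 2 * ‖w‖ + ‖w‖ ^ 2 / 2 = ‖w‖ + (‖w‖ + ‖w‖ ^ 2 / 2) by ring,
    Real.exp_add]
  exact mul_le_mul h1 ((Complex.norm_exp_le_exp_norm _).trans (Real.exp_le_exp.2 h2))
    (norm_nonneg _) (Real.exp_nonneg _)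

lemma norm_E₂_le_exp_nine_mul_pow_three (w : ℂ) : ‖E₂ w‖ ≤ Real.exp (9 * ‖w‖ ^ 3) := by
  have h0 := norm_nonneg w
  rcases le_or_gt ‖w‖ (1 / 2) with hw | hw
  · exact (norm_E₂_le_exp_pow_three_of_norm_le_half hw).trans
      (Real.exp_le_exp.2 (by nlinarith [pow_nonneg h0 3]))
  · have h4 : 0 ≤ 9 * ‖w‖ + 4 := by positivity
    -- `9t³ - 2t - t²/2 = t (t - 1/2) (9t + 4)`
    exact (norm_E₂_le_exp w).trans (Real.exp_le_exp.2
      (by nlinarith [mul_nonneg h0 (mul_nonneg (sub_nonneg.2 hw.le) h4)]))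

lemma norm_prod_E₂_le {ι : Type*} (s : Finset ι) (w : ι → ℂ) :
    ‖∏ i ∈ s, E₂ (w i)‖ ≤ Real.exp (9 * ∑ i ∈ s, ‖w i‖ ^ 3) := by
  rw [norm_prod, Finset.mul_sum, Real.exp_sum]
  exact Finset.prod_le_prod (fun _ _ => norm_nonneg _)
    fun _ _ => norm_E₂_le_exp_nine_mul_pow_three _

lemma summable_inv_add_add_one_pow {k : ℕ} (hk : 2 < k) :
    Summable fun p : ℕ × ℕ => ((p.1 + p.2 + 1 : ℝ) ^ k)⁻¹ := by
  let ι : ℕ × ℕ → Fin 2 → ℤ := fun p => ![((p.1 + 1 : ℕ) : ℤ), ((p.2 + 1 : ℕ) : ℤ)]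
  have hι : ι.Injective := fun p q h => by
    have h0 := congrFun h 0
    have h1 := congrFun h 1
    simp only [ι, Matrix.cons_val_zero, Matrix.cons_val_one] at h0 h1
    ext <;> omega
  refine ((EisensteinSeries.summable_one_div_norm_rpow (k := k)
    (by exact_mod_cast hk)).comp_injective hι).of_nonneg_of_le (fun _ => by positivity) fun p => ?_
  have hnorm : ‖ι p‖ = max ((p.1 : ℝ) + 1) (p.2 + 1) := by
    simp only [ι, EisensteinSeries.norm_eq_max_natAbs, Matrix.cons_val_zero, Matrix.cons_val_one,
      Int.natAbs_natCast]
    push_cast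
    rfl
  simp only [Function.comp_apply, hnorm]
  rw [Real.rpow_neg (by positivity), Real.rpow_natCast]
  gcongr
  have h1 : (0 : ℝ) ≤ p.1 := p.1.cast_nonneg
  have h2 : (0 : ℝ) ≤ p.2 := p.2.cast_nonneg
  exact max_le (by linarith) (by linarith)

lemma norm_div_mul_add_le (z : ℂ) {τ : ℝ} (hτ : 1 ≤ τ) (m n : ℕ) :
    ‖z / ((m * τ + n : ℝ) : ℂ)‖ ≤ 2 * ‖z‖ / (m + n + 1) := by
  rcases Nat.eq_zero_or_pos (m + n) with h | h
  · obtain ⟨rfl, rfl⟩ : m = 0 ∧ n = 0 := by omega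
    simp
  have hmn : (1 : ℝ) ≤ m + n := by exact_mod_cast h
  have hd : (m : ℝ) + n ≤ m * τ + n := by nlinarith [(m.cast_nonneg : (0 : ℝ) ≤ m)]
  rw [norm_div, Complex.norm_real, Real.norm_of_nonneg (by linarith),
    div_le_div_iff₀ (by linarith) (by linarith)]
  nlinarith [norm_nonneg z]

lemma norm_div_mul_add_pow_three_le {z : ℂ} {R : ℝ} (hz : ‖z‖ ≤ R) {τ : ℝ} (hτ : 1 ≤ τ)
    (m n : ℕ) : ‖z / ((m * τ + n : ℝ) : ℂ)‖ ^ 3 ≤ 8 * R ^ 3 * ((m + n + 1 : ℝ) ^ 3)⁻¹ := by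
  have hR : 0 ≤ R := (norm_nonneg z).trans hz
  calc ‖z / ((m * τ + n : ℝ) : ℂ)‖ ^ 3 ≤ (2 * ‖z‖ / (m + n + 1)) ^ 3 := by
        gcongr
        exact norm_div_mul_add_le z hτ m n
    _ ≤ 8 * R ^ 3 * ((m + n + 1 : ℝ) ^ 3)⁻¹ := by
        rw [div_pow, mul_pow, div_eq_mul_inv]
        gcongr
        norm_num

theorem double_product_uniformly_bounded (K : Set ℂ) (hK : IsCompact K) :
    ∃ c : ℝ, 0 < c ∧ ∀ z ∈ K, ∀ τ ∈ Set.Icc (1 : ℝ) 2, ∀ M N : ℕ,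
      ‖(∏ m ∈ Finset.range (M + 1), ∏ n ∈ Finset.range (N + 1),
          if m = 0 ∧ n = 0 then 1
          else E₂ (-z / (((m : ℝ) * τ + (n : ℝ) : ℝ) : ℂ)))‖ ≤ c := by
  obtain ⟨R, hR⟩ := hK.isBounded.exists_norm_le
  set g : ℕ × ℕ → ℝ := fun p => ((p.1 + p.2 + 1 : ℝ) ^ 3)⁻¹
  refine ⟨Real.exp (72 * R ^ 3 * ∑' p, g p), Real.exp_pos _, fun z hz τ hτ M N => ?_⟩
  -- Since `-z / 0 = 0` in Lean, the omitted factor is `E₂ 0 = 1` anyway.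
  have hterm : ∀ m n : ℕ, (if m = 0 ∧ n = 0 then 1
      else E₂ (-z / (((m : ℝ) * τ + (n : ℝ) : ℝ) : ℂ))) =
      E₂ (-z / (((m : ℝ) * τ + (n : ℝ) : ℝ) : ℂ)) :=
    fun m n => ite_eq_right_iff.2 fun h => by simp [h.1, h.2, E₂_zero]
  simp_rw [hterm, ← Finset.prod_product']
  refine (norm_prod_E₂_le _ _).trans (Real.exp_le_exp.2 ?_)
  have hR0 : 0 ≤ R := (norm_nonneg z).trans (hR z hz)
  calc _ ≤ 9 * ∑ p ∈ Finset.range (M + 1) ×ˢ Finset.range (N + 1), 8 * R ^ 3 * g p := by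
        gcongr with p
        exact norm_div_mul_add_pow_three_le (by simpa using hR z hz) hτ.1 p.1 p.2
    _ = 72 * R ^ 3 * ∑ p ∈ Finset.range (M + 1) ×ˢ Finset.range (N + 1), g p := by
        rw [← Finset.mul_sum]; ring
    _ ≤ 72 * R ^ 3 * ∑' p, g p := by
        gcongr
        exact (summable_inv_add_add_one_pow (by norm_num)).sum_le_tsum _ fun p _ => by positivity
end

section
/- For every real α > 1, 1/Γ(1 − 1/α) ≤ e(α − 1)/α. -/
/-!
On `[1, ∞)` the factor `u ^ (s - 1)` of the Gamma integrand is at least `1` when `s ≥ 1`, so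
`Γ(s) ≥ ∫₁^∞ e^{-u} du = e⁻¹`. Applied to `Γ(s + 1) = s Γ(s)` this gives `1 / Γ(s) ≤ e s` for
every `s > 0`, and the theorem is the case `s = 1 - 1/α`.
-/

open MeasureTheory Set Real

lemma exp_neg_one_le_Gamma {s : ℝ} (hs : 1 ≤ s) : exp (-1) ≤ Gamma s := by
  have hint : IntegrableOn (fun u => exp (-u) * u ^ (s - 1)) (Ioi 0) :=
    GammaIntegral_convergent (by linarith)
  rw [Gamma_eq_integral (by linarith), ← integral_exp_neg_Ioi 1]
  calc ∫ u in Ioi (1 : ℝ), exp (-u)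
      ≤ ∫ u in Ioi (1 : ℝ), exp (-u) * u ^ (s - 1) := by
        refine setIntegral_mono_on (by simpa using exp_neg_integrableOn_Ioi 1 one_pos)
          (hint.mono_set (Ioi_subset_Ioi zero_le_one)) measurableSet_Ioi fun u hu => ?_
        exact le_mul_of_one_le_right (exp_nonneg _) (one_le_rpow (le_of_lt hu) (by linarith))
    _ ≤ ∫ u in Ioi (0 : ℝ), exp (-u) * u ^ (s - 1) := by
        refine setIntegral_mono_set hint ?_ (Ioi_subset_Ioi zero_le_one).eventuallyLE
        filter_upwards [ae_restrict_mem measurableSet_Ioi] with u hu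
        exact mul_nonneg (exp_nonneg _) (rpow_nonneg (le_of_lt hu) _)

lemma one_div_Gamma_le_exp_one_mul {s : ℝ} (hs : 0 < s) : 1 / Gamma s ≤ exp 1 * s := by
  have hΓ : exp (-1) ≤ s * Gamma s := by
    rw [← Gamma_add_one hs.ne']
    exact exp_neg_one_le_Gamma (by linarith)
  rw [div_le_iff₀ (Gamma_pos_of_pos hs), mul_assoc]
  calc (1 : ℝ) = exp 1 * exp (-1) := by rw [← exp_add, add_neg_cancel, exp_zero]
    _ ≤ exp 1 * (s * Gamma s) := mul_le_mul_of_nonneg_left hΓ (exp_nonneg 1)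

theorem inv_gamma_upper_bound (α : ℝ) (hα : 1 < α) :
    1 / Real.Gamma (1 - 1 / α) ≤ Real.exp 1 * (α - 1) / α := by
  have hα0 : 0 < α := by linarith
  have hs : 0 < 1 - 1 / α := by
    rw [sub_pos, div_lt_one hα0]
    exact hα
  have hrhs : exp 1 * (α - 1) / α = exp 1 * (1 - 1 / α) := by
    field_simp
  rw [hrhs]
  exact one_div_Gamma_le_exp_one_mul hs
end
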